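/- Let q_l = 1/(1 + e^{2^{l-η}}) for real η and integer l. Then for l ≤ η, the binary entropy satisfies H(q_l) > 1 - log₂(e) · 2^{l - η}. -/

import Mathlib

noncomputable def binH (p : ℝ) : ℝ :=
  -(p * Real.logb 2 p) - (1 - p) * Real.logb 2 (1 - p)

/-!
With `E = exp t` and `q = 1 / (1 + E)`, we have `log q = -log (1 + E)` and
`log (1 - q) = t - log (1 + E)`, so in nats the entropy is `log (1 + E) - (1 - q) t`.
For `t > 0` this exceeds `log 2 - t` because `log (1 + E) > log 2` and `q t > 0`.
-/

open Real

lemma binH_one_div_one_add_exp (t : ℝ) :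
    binH (1 / (1 + exp t)) = (log (1 + exp t) - exp t / (1 + exp t) * t) / log 2 := by
  have hE : 0 < 1 + exp t := by positivity
  have h1q : 1 - 1 / (1 + exp t) = exp t / (1 + exp t) := by field_simp; ring
  rw [binH, h1q, logb, logb, log_div one_ne_zero hE.ne', log_div (exp_pos t).ne' hE.ne',
    log_exp, log_one]
  field_simp
  ring

lemma one_sub_logb_exp_one_mul_lt_binH {t : ℝ} (ht : 0 < t) :
    1 - logb 2 (exp 1) * t < binH (1 / (1 + exp t)) := by
  have hlog2 : 0 < log 2 := log_pos one_lt_two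
  have hE : 0 < 1 + exp t := by positivity
  have hlog : log 2 < log (1 + exp t) := log_lt_log two_pos (by linarith [one_lt_exp_iff.2 ht])
  have hgap : 0 < t - exp t / (1 + exp t) * t := by
    have : t - exp t / (1 + exp t) * t = t / (1 + exp t) := by field_simp; ring
    rw [this]
    positivity
  have hrhs : 1 - logb 2 (exp 1) * t = (log 2 - t) / log 2 := by
    rw [logb, log_exp]
    field_simp
  rw [binH_one_div_one_add_exp, hrhs, div_lt_div_iff_of_pos_right hlog2]
  linarith

theorem stmt_7_general (η : ℝ) (l : ℤ) :
    binH (1 / (1 + Real.exp ((2 : ℝ) ^ ((l : ℝ) - η)))) >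
      1 - Real.logb 2 (Real.exp 1) * (2 : ℝ) ^ ((l : ℝ) - η) :=
  one_sub_logb_exp_one_mul_lt_binH (rpow_pos_of_pos two_pos _)

theorem stmt_7 (η : ℝ) (l : ℤ) (hl : (l : ℝ) ≤ η) :
    binH (1 / (1 + Real.exp ((2 : ℝ) ^ ((l : ℝ) - η)))) >
      1 - Real.logb 2 (Real.exp 1) * (2 : ℝ) ^ ((l : ℝ) - η) :=
  stmt_7_general η l
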